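/- Let the Loewner matrix L have entries L_{ij} = (g(Z_i)−g(σ_j))/(Z_i−σ_j), where g is a real function, the sample points Z_1,…,Z_N form a set closed under complex conjugation ordered in conjugate pairs, and the support points σ_1,…,σ_d form a set closed under conjugation ordered in conjugate pairs, with all Z_i distinct from all σ_j. Let 𝕋 be the block diagonal unitary matrix with block 1 for real Z_i and block T = (1/√2)[[1,1],[1/i,−1/i]] for each conjugate pair, and 𝕊 the block diagonal matrix with block 1 for real σ_j and block S = [[1,i],[1,−i]] for each conjugate pair. Then 𝕋·L·𝕊 is a real matrix. -/

import Mathlib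

/-!
Let `P` be the permutation exchanging the two members of each conjugate pair. Since `g` is real
and both point sets are closed under conjugation, `conj L = P L P`; the columns of `T` and the
rows of `S` are conjugate to each other, so `conj 𝕋 = 𝕋 P` and `conj 𝕊 = P 𝕊`. Hence
`conj (𝕋 L 𝕊) = 𝕋 P P L P P 𝕊 = 𝕋 L 𝕊`.
-/

open Matrix
open scoped Kronecker

namespace Matrix

variable {l m n o R : Type*} [Fintype m] [Fintype n] [CommSemiring R] [StarRing R]

theorem map_star_mul_mul_of_submatrix_eq_map_star {X : Matrix l m R} {A : Matrix m n R}
    {Y : Matrix n o R} (e : m ≃ m) (f : n ≃ n) (hX : X.submatrix id e = X.map star)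
    (hA : A.submatrix e f = A.map star) (hY : Y.submatrix f id = Y.map star) :
    (X * A * Y).map star = X * A * Y := by
  change (X * A * Y).map (starRingEnd R) = X * A * Y
  rw [Matrix.map_mul, Matrix.map_mul]
  change X.map star * A.map star * Y.map star = X * A * Y
  rw [← hX, ← hA, ← hY, submatrix_mul_equiv, submatrix_mul_equiv, submatrix_id_id]

end Matrix

section LoewnerMatrix

variable {m n K : Type*} [Field K] [StarRing K]

def loewnerMatrix (g : K → K) (Z : m → K) (σ : n → K) : Matrix m n K :=
  of fun i j => (g (Z i) - g (σ j)) / (Z i - σ j)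

theorem loewnerMatrix_submatrix {g : K → K} (hg : ∀ z, g (star z) = star (g z))
    {Z : m → K} {σ : n → K} (e : m ≃ m) (f : n ≃ n) (hZ : ∀ i, Z (e i) = star (Z i))
    (hσ : ∀ j, σ (f j) = star (σ j)) :
    (loewnerMatrix g Z σ).submatrix e f = (loewnerMatrix g Z σ).map star := by
  ext i j
  simp only [loewnerMatrix, submatrix_apply, map_apply, of_apply, hZ, hσ, hg, star_sub,
    star_div₀]

end LoewnerMatrix

def conjPairSwap (ι κ : Type*) : ι ⊕ κ × Fin 2 ≃ ι ⊕ κ × Fin 2 :=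
  Equiv.sumCongr (Equiv.refl ι) ((Equiv.refl κ).prodCongr (Equiv.swap 0 1))

section ConjugatePairs

variable {ι κ : Type*}

def conjPairs (r : ι → ℝ) (c : κ → ℂ) : ι ⊕ κ × Fin 2 → ℂ :=
  Sum.elim (fun i => (r i : ℂ)) (fun x => if x.2 = 0 then c x.1 else star (c x.1))

theorem conjPairs_conjPairSwap (r : ι → ℝ) (c : κ → ℂ) (k : ι ⊕ κ × Fin 2) :
    conjPairs r c (conjPairSwap ι κ k) = star (conjPairs r c k) := by
  rcases k with i | ⟨x, s⟩
  · simp [conjPairs, conjPairSwap, Complex.conj_ofReal]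
  · fin_cases s <;> simp [conjPairs, conjPairSwap]

variable {R : Type*} [CommSemiring R] [StarRing R] [DecidableEq ι] [DecidableEq κ]

def conjPairBlockDiag (B : Matrix (Fin 2) (Fin 2) R) :
    Matrix (ι ⊕ κ × Fin 2) (ι ⊕ κ × Fin 2) R :=
  fromBlocks 1 0 0 (1 ⊗ₖ B)

theorem conjPairBlockDiag_submatrix_id_conjPairSwap {B : Matrix (Fin 2) (Fin 2) R}
    (hB : B.submatrix id (Equiv.swap 0 1) = B.map star) :
    (conjPairBlockDiag B).submatrix id (conjPairSwap ι κ) = (conjPairBlockDiag B).map star := by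
  have hBst (s t : Fin 2) := congrFun₂ hB s t
  simp only [submatrix_apply, map_apply, id_eq] at hBst
  ext (a | ⟨x, s⟩) (b | ⟨y, t⟩) <;>
    simp [conjPairBlockDiag, conjPairSwap, one_apply, apply_ite star, hBst]

theorem conjPairBlockDiag_submatrix_conjPairSwap_id {B : Matrix (Fin 2) (Fin 2) R}
    (hB : B.submatrix (Equiv.swap 0 1) id = B.map star) :
    (conjPairBlockDiag B).submatrix (conjPairSwap ι κ) id = (conjPairBlockDiag B).map star := by
  have hBst (s t : Fin 2) := congrFun₂ hB s t
  simp only [submatrix_apply, map_apply, id_eq] at hBst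
  ext (a | ⟨x, s⟩) (b | ⟨y, t⟩) <;>
    simp [conjPairBlockDiag, conjPairSwap, one_apply, apply_ite star, hBst]

end ConjugatePairs

theorem loewner_realified {p q p' q' : ℕ} (g : ℂ → ℂ)
    (hg : ∀ z, g (star z) = star (g z))
    (Zr : Fin p → ℝ) (Zc : Fin q → ℂ)
    (σr : Fin p' → ℝ) (σc : Fin q' → ℂ) :
    let Z : (Fin p ⊕ Fin q × Fin 2) → ℂ :=
      Sum.elim (fun i => ((Zr i : ℝ) : ℂ))
        (fun x => if x.2 = 0 then Zc x.1 else star (Zc x.1))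
    let σ : (Fin p' ⊕ Fin q' × Fin 2) → ℂ :=
      Sum.elim (fun i => ((σr i : ℝ) : ℂ))
        (fun x => if x.2 = 0 then σc x.1 else star (σc x.1))
    ∀ _hdist : ∀ i j, Z i ≠ σ j,
    let L : Matrix (Fin p ⊕ Fin q × Fin 2) (Fin p' ⊕ Fin q' × Fin 2) ℂ :=
      Matrix.of fun i j => (g (Z i) - g (σ j)) / (Z i - σ j)
    let T : Matrix (Fin 2) (Fin 2) ℂ :=
      (1 / ((Real.sqrt 2 : ℝ) : ℂ)) • !![1, 1; 1 / Complex.I, -(1 / Complex.I)]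
    let S : Matrix (Fin 2) (Fin 2) ℂ := !![1, Complex.I; 1, -Complex.I]
    let 𝕋 : Matrix (Fin p ⊕ Fin q × Fin 2) (Fin p ⊕ Fin q × Fin 2) ℂ :=
      Matrix.of fun i j =>
        match i, j with
        | Sum.inl i, Sum.inl j => if i = j then 1 else 0
        | Sum.inr x, Sum.inr y => if x.1 = y.1 then T x.2 y.2 else 0
        | _, _ => 0
    let 𝕊 : Matrix (Fin p' ⊕ Fin q' × Fin 2) (Fin p' ⊕ Fin q' × Fin 2) ℂ :=
      Matrix.of fun i j =>
        match i, j with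
        | Sum.inl i, Sum.inl j => if i = j then 1 else 0
        | Sum.inr x, Sum.inr y => if x.1 = y.1 then S x.2 y.2 else 0
        | _, _ => 0
    ∀ i j, ((𝕋 * L * 𝕊) i j).im = 0 := by
  intro Z σ _ L T S 𝕋 𝕊 i j
  have hT : T.submatrix id (Equiv.swap 0 1) = T.map star := by
    ext s t
    fin_cases s <;> fin_cases t <;> simp [T]
  have hS : S.submatrix (Equiv.swap 0 1) id = S.map star := by
    ext s t
    fin_cases s <;> fin_cases t <;> simp [S]
  have h𝕋 : 𝕋 = conjPairBlockDiag T := by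
    ext (a | ⟨x, s⟩) (b | ⟨y, t⟩) <;> simp [𝕋, conjPairBlockDiag, one_apply]
  have h𝕊 : 𝕊 = conjPairBlockDiag S := by
    ext (a | ⟨x, s⟩) (b | ⟨y, t⟩) <;> simp [𝕊, conjPairBlockDiag, one_apply]
  have hL : L = loewnerMatrix g (conjPairs Zr Zc) (conjPairs σr σc) := rfl
  have hreal : (𝕋 * L * 𝕊).map star = 𝕋 * L * 𝕊 := by
    rw [h𝕋, h𝕊, hL]
    exact map_star_mul_mul_of_submatrix_eq_map_star _ _
      (conjPairBlockDiag_submatrix_id_conjPairSwap hT)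
      (loewnerMatrix_submatrix hg _ _ (conjPairs_conjPairSwap Zr Zc) (conjPairs_conjPairSwap σr σc))
      (conjPairBlockDiag_submatrix_conjPairSwap_id hS)
  exact Complex.conj_eq_iff_im.mp (congrFun₂ hreal i j)
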